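/- Let β ∈ [0,1), λ = 1−β, and let n satisfy Assumption 1 with δ* > λ. Then the mean clone size converges: lim_{t→∞} E(Y_t) = δ*/(δ*−λ), where E(Y_t) = e^{λt}·(∫_0^t n_τ e^{−λτ} dτ)/(∫_0^t n_τ dτ). -/

import Mathlib

/-!
After the substitution `s = t - τ`, and since `n` vanishes at negative times,
`e^{μt} ∫_0^t n_τ e^{-μτ} dτ / n_t = ∫_0^∞ (n_{t-s} / n_t) e^{μs} ds`, and `E(Y_t)` is the
quotient of this integral for `μ = λ` and for `μ = 0`. The existence of the limits of
`n_{t-s} / n_t` and of `log n_t / t` forces `n_{t-s} / n_t → e^{-δ* s}` (Cesàro on `log n` along an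
arithmetic progression). For `μ < κ < δ*` the one-step bound `n_{u-1} ≤ e^{-κ} n_u`, iterated and
combined with monotonicity, dominates the integrand by `C e^{(μ-κ)s}`, so dominated convergence
gives the limit `∫_0^∞ e^{(μ-δ*)s} ds = 1 / (δ* - μ)`, and `E(Y_t) → δ* / (δ* - λ)`.
-/

open Filter Real intervalIntegral

def Assumption1 (n : ℝ → ℝ) : Prop :=
  (∀ τ : ℝ, τ < 0 → n τ = 0) ∧
  ContinuousOn n (Set.Ioi 0) ∧
  Filter.Tendsto n (nhdsWithin 0 (Set.Ioi 0)) (nhds (n 0)) ∧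
  (∀ τ : ℝ, 0 < τ → 0 < n τ) ∧
  MonotoneOn n (Set.Ioi 0) ∧
  (∀ x : ℝ, 0 ≤ x → ∃ L : ℝ, 0 < L ∧
    Filter.Tendsto (fun t : ℝ => n (t - x) / n t) Filter.atTop (nhds L))

open MeasureTheory Set Topology

theorem eventually_exp_mul_le_of_tendsto_log_div {f : ℝ → ℝ} {δ κ : ℝ}
    (hf : ∀ᶠ t in atTop, 0 < f t) (hδ : Tendsto (fun t => log (f t) / t) atTop (𝓝 δ))
    (hκ : κ < δ) : ∀ᶠ t in atTop, exp (κ * t) ≤ f t := by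
  filter_upwards [hδ.eventually (eventually_gt_nhds hκ), hf, eventually_gt_atTop 0]
    with t hlog hft ht
  rw [lt_div_iff₀ ht] at hlog
  exact (exp_le_exp.2 hlog.le).trans_eq (exp_log hft)

theorem eq_mul_of_tendsto_sub_of_tendsto_div {f : ℝ → ℝ} {δ c x : ℝ} (hx : 0 < x)
    (hf : Tendsto (fun t => f t / t) atTop (𝓝 δ))
    (hd : Tendsto (fun t => f t - f (t - x)) atTop (𝓝 c)) : c = δ * x := by
  set g : ℕ → ℝ := fun k => f (k * x)
  have hmul : Tendsto (fun k : ℕ => (k : ℝ) * x) atTop atTop :=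
    tendsto_natCast_atTop_atTop.atTop_mul_const hx
  have hsucc : Tendsto (fun k : ℕ => g (k + 1) - g k) atTop (𝓝 c) := by
    have hshift : Tendsto (fun k : ℕ => ((k : ℝ) + 1) * x) atTop atTop :=
      (tendsto_natCast_atTop_atTop.atTop_add tendsto_const_nhds).atTop_mul_const hx
    refine (hd.comp hshift).congr fun k => ?_
    simp only [Function.comp_apply, g, Nat.cast_succ, add_mul, one_mul, add_sub_cancel_right]
  -- Cesàro: both sides compute the limit of `g k / k`.
  have hcesaro : Tendsto (fun k : ℕ => (k : ℝ)⁻¹ * (g k - g 0)) atTop (𝓝 c) := by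
    simpa only [Finset.sum_range_sub] using hsucc.cesaro
  have hgrowth : Tendsto (fun k : ℕ => (k : ℝ)⁻¹ * (g k - g 0)) atTop (𝓝 (δ * x)) := by
    have := ((hf.comp hmul).mul_const x).sub
      ((tendsto_inv_atTop_nhds_zero_nat (𝕜 := ℝ)).mul_const (g 0))
    rw [zero_mul, sub_zero] at this
    refine this.congr' ?_
    filter_upwards [eventually_gt_atTop 0] with k hk
    simp only [Function.comp_apply, g]
    field_simp
  exact tendsto_nhds_unique hcesaro hgrowth

theorem le_pow_mul_of_forall_sub_one_le {f : ℝ → ℝ} {r T : ℝ} (hr : 0 ≤ r)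
    (hstep : ∀ u, T ≤ u → f (u - 1) ≤ r * f u) :
    ∀ (k : ℕ) {t : ℝ}, T + k ≤ t → f (t - k) ≤ r ^ k * f t
  | 0, t, _ => by simp
  | k + 1, t, ht => by
    push_cast at ht ⊢
    calc f (t - (k + 1)) = f (t - 1 - k) := by ring_nf
      _ ≤ r ^ k * f (t - 1) := le_pow_mul_of_forall_sub_one_le hr hstep k (by linarith)
      _ ≤ r ^ k * (r * f t) := by gcongr; exact hstep t (by linarith [k.cast_nonneg (α := ℝ)])
      _ = r ^ (k + 1) * f t := by ring

theorem exp_mul_integral_div_eq_setIntegral_Ioi {f : ℝ → ℝ} (hf : ∀ τ, τ < 0 → f τ = 0)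
    (μ : ℝ) {t : ℝ} (ht : 0 ≤ t) :
    exp (μ * t) * (∫ τ in 0..t, f τ * exp (-μ * τ)) / f t =
      ∫ s in Ioi 0, f (t - s) / f t * exp (μ * s) := by
  have hshift : exp (μ * t) * (∫ τ in 0..t, f τ * exp (-μ * τ)) =
      ∫ s in 0..t, f (t - s) * exp (μ * s) := by
    have hreflect := integral_comp_sub_left (fun τ => exp (μ * t) * (f τ * exp (-μ * τ)))
      (a := 0) (b := t) t
    rw [sub_self, sub_zero] at hreflect
    rw [← intervalIntegral.integral_const_mul, ← hreflect]
    refine integral_congr fun s _ => ?_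
    rw [mul_left_comm, ← exp_add]
    ring_nf
  rw [hshift, ← intervalIntegral.integral_div, integral_of_le ht,
    setIntegral_eq_of_subset_of_forall_sdiff_eq_zero measurableSet_Ioi Ioc_subset_Ioi_self]
  · exact integral_congr_ae (by filter_upwards with s using by ring)
  · rintro s ⟨hs, hst⟩
    rw [hf (t - s) (by simp_all)]
    simp

namespace Assumption1

variable {n : ℝ → ℝ} {δ : ℝ}

theorem pos (hn : Assumption1 n) {t : ℝ} (ht : 0 < t) : 0 < n t := hn.2.2.2.1 t ht

theorem nonneg (hn : Assumption1 n) (t : ℝ) : 0 ≤ n t := by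
  rcases lt_trichotomy t 0 with ht | rfl | ht
  · exact (hn.1 t ht).ge
  · exact ge_of_tendsto hn.2.2.1 <| eventually_nhdsWithin_of_forall fun u hu => (hn.pos hu).le
  · exact (hn.pos ht).le

theorem monotone (hn : Assumption1 n) : Monotone n := by
  intro a b hab
  rcases lt_trichotomy a 0 with ha | rfl | ha
  · exact (hn.1 a ha).trans_le (hn.nonneg b)
  · rcases hab.eq_or_lt with rfl | hb
    · rfl
    · refine le_of_tendsto hn.2.2.1 ?_
      filter_upwards [Ioo_mem_nhdsGT hb] with u hu
      exact hn.2.2.2.2.1 hu.1 hb hu.2.le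
  · exact hn.2.2.2.2.1 ha (ha.trans_le hab) hab

theorem tendsto_comp_sub_div (hn : Assumption1 n)
    (hδ : Tendsto (fun t => log (n t) / t) atTop (𝓝 δ)) {x : ℝ} (hx : 0 < x) :
    Tendsto (fun t => n (t - x) / n t) atTop (𝓝 (exp (-(δ * x)))) := by
  obtain ⟨L, hL, hlim⟩ := hn.2.2.2.2.2 x hx.le
  suffices hlog : -log L = δ * x by rwa [← neg_eq_iff_eq_neg.1 hlog, exp_log hL]
  refine eq_mul_of_tendsto_sub_of_tendsto_div hx hδ ?_
  refine ((continuousAt_log hL.ne').tendsto.comp hlim).neg.congr' ?_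
  filter_upwards [eventually_gt_atTop x] with t ht
  rw [Function.comp_apply, log_div (hn.pos (sub_pos.2 ht)).ne' (hn.pos (hx.trans ht)).ne']
  ring

theorem exists_eventually_le_mul_exp_neg_mul (hn : Assumption1 n)
    (hδ : Tendsto (fun t => log (n t) / t) atTop (𝓝 δ)) {κ : ℝ} (hκ : 0 ≤ κ) (hκδ : κ < δ) :
    ∃ C, ∀ᶠ t in atTop, ∀ s, 0 ≤ s → n (t - s) ≤ C * exp (-(κ * s)) * n t := by
  obtain ⟨T, hT⟩ : ∃ T, ∀ u, T ≤ u → n (u - 1) ≤ exp (-κ) * n u := by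
    have hlt : exp (-(δ * 1)) < exp (-κ) := exp_lt_exp.2 (by linarith)
    obtain ⟨T, hT⟩ := eventually_atTop.1 <|
      ((hn.tendsto_comp_sub_div hδ one_pos).eventually (eventually_le_nhds hlt)).and
        (eventually_gt_atTop 0)
    exact ⟨T, fun u hu => (div_le_iff₀ (hn.pos (hT u hu).2)).1 (hT u hu).1⟩
  have hnT : 0 ≤ n T := hn.nonneg T
  -- Up to `T`, monotonicity and `e^{κt} ≤ n t` cost the factor `n T`; beyond `T`, rounding `s`
  -- down to an integer before iterating the one-step bound costs `e^κ`.
  refine ⟨n T + exp κ, ?_⟩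
  filter_upwards [eventually_exp_mul_le_of_tendsto_log_div
    ((eventually_gt_atTop 0).mono fun _ => hn.pos) hδ hκδ] with t hexp s hs
  have hnt : 0 ≤ n t := hn.nonneg t
  rcases lt_or_ge (t - s) 0 with hneg | hnonneg
  · rw [hn.1 _ hneg]
    positivity
  rcases le_or_gt (t - s) T with hsmall | hlarge
  · calc n (t - s) ≤ n T := hn.monotone hsmall
      _ ≤ n T * exp (-(κ * s)) * exp (κ * t) := by
        rw [mul_assoc, ← exp_add]
        exact le_mul_of_one_le_right hnT (one_le_exp (by nlinarith))
      _ ≤ (n T + exp κ) * exp (-(κ * s)) * n t := by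
        have := exp_pos κ
        gcongr
        linarith
  · have hks : (⌊s⌋₊ : ℝ) ≤ s := Nat.floor_le hs
    calc n (t - s) ≤ n (t - ⌊s⌋₊) := hn.monotone (by linarith)
      _ ≤ exp (-κ) ^ ⌊s⌋₊ * n t :=
        le_pow_mul_of_forall_sub_one_le (exp_pos _).le hT _ (by linarith)
      _ ≤ exp κ * exp (-(κ * s)) * n t := by
        gcongr
        rw [← exp_nat_mul, ← exp_add, exp_le_exp]
        nlinarith [Nat.lt_floor_add_one s]
      _ ≤ (n T + exp κ) * exp (-(κ * s)) * n t := by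
        gcongr
        linarith

theorem tendsto_exp_mul_integral_div (hn : Assumption1 n)
    (hδ : Tendsto (fun t => log (n t) / t) atTop (𝓝 δ)) (hδ0 : 0 < δ) {μ : ℝ} (hμ : μ < δ) :
    Tendsto (fun t => exp (μ * t) * (∫ τ in 0..t, n τ * exp (-μ * τ)) / n t) atTop
      (𝓝 (δ - μ)⁻¹) := by
  obtain ⟨κ, hκ, hκδ⟩ := exists_between (max_lt hμ hδ0)
  obtain ⟨C, hC⟩ :=
    hn.exists_eventually_le_mul_exp_neg_mul hδ ((le_max_right _ _).trans hκ.le) hκδ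
  have hdom : Tendsto (fun t => ∫ s in Ioi 0, n (t - s) / n t * exp (μ * s)) atTop
      (𝓝 (∫ s in Ioi 0, exp ((μ - δ) * s))) := by
    refine tendsto_integral_filter_of_dominated_convergence (fun s => C * exp ((μ - κ) * s))
      (Eventually.of_forall fun t => ?_) ?_ ?_ ?_
    · exact (((hn.monotone.measurable.comp (measurable_const_sub t)).div_const _).mul
        (measurable_exp.comp (measurable_const_mul μ))).aestronglyMeasurable
    · filter_upwards [hC, eventually_gt_atTop 0] with t hCt ht
      refine (ae_restrict_iff' measurableSet_Ioi).2 (Eventually.of_forall fun s hs => ?_)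
      have hnt := hn.pos ht
      rw [norm_of_nonneg (by have := hn.nonneg (t - s); positivity), div_mul_eq_mul_div,
        div_le_iff₀ hnt]
      calc n (t - s) * exp (μ * s) ≤ C * exp (-(κ * s)) * n t * exp (μ * s) := by
            gcongr; exact hCt s hs.le
        _ = C * exp ((μ - κ) * s) * n t := by
            rw [mul_right_comm, mul_assoc C, ← exp_add]; ring_nf
    · exact (integrableOn_exp_mul_Ioi (by linarith [le_max_left μ 0]) 0).const_mul C
    · refine (ae_restrict_iff' measurableSet_Ioi).2 (Eventually.of_forall fun s hs => ?_)
      convert (hn.tendsto_comp_sub_div hδ hs).mul_const (exp (μ * s)) using 2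
      rw [← exp_add]; ring_nf
  rw [integral_exp_mul_Ioi (by linarith), mul_zero, exp_zero, neg_div, ← div_neg, neg_sub,
    one_div] at hdom
  refine hdom.congr' ?_
  filter_upwards [eventually_ge_atTop 0] with t ht
  exact (exp_mul_integral_div_eq_setIntegral_Ioi hn.1 μ ht).symm

end Assumption1

/-- If `δ* > λ = 1 − β`, the mean clone size
`E(Y_t) = e^{λt} (∫_0^t n_τ e^{−λτ} dτ)/(∫_0^t n_τ dτ)` converges to `δ*/(δ*−λ)`. -/
theorem mean_clone_size_limit_fit
    (β : ℝ) (hβ : β ∈ Set.Ico (0 : ℝ) 1)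
    (n : ℝ → ℝ) (hn : Assumption1 n) (δ : ℝ)
    (hδlim : Filter.Tendsto (fun t : ℝ => Real.log (n t) / t) Filter.atTop (nhds δ))
    (hδ : 1 - β < δ) :
    Filter.Tendsto
      (fun t : ℝ =>
        Real.exp ((1 - β) * t) * (∫ τ in (0:ℝ)..t, n τ * Real.exp (-(1 - β) * τ)) /
          (∫ τ in (0:ℝ)..t, n τ))
      Filter.atTop (nhds (δ / (δ - (1 - β)))) := by
  have hδ0 : 0 < δ := (sub_pos.2 hβ.2).trans hδ
  have hnum := hn.tendsto_exp_mul_integral_div hδlim hδ0 hδ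
  have hden := hn.tendsto_exp_mul_integral_div hδlim hδ0 hδ0
  simp only [zero_mul, neg_zero, exp_zero, mul_one, one_mul, sub_zero] at hden
  rw [← inv_div_inv]
  refine (hnum.div hden (inv_ne_zero hδ0.ne')).congr' ?_
  filter_upwards [eventually_gt_atTop 0] with t ht
  exact div_div_div_cancel_right₀ (hn.pos ht).ne' _ _
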